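/- arXiv:1603.02782 — 6 statements merged into one kernel-verified Lean document; each statement's English description precedes it below -/
import Mathlib

section
/- Let r, k, m, n be positive integers, let U ∈ ℝ^{m×r} and V ∈ ℝ^{n×r} have orthonormal columns (UᵀU = VᵀV = I_r), let S ∈ ℝ^{r×r}, and set Ã = U S Vᵀ. Let 𝒳 ⊆ ℝ^{m×k} and 𝒴 ⊆ ℝ^{n×k} be nonempty finite sets, μ_𝒳 = max_{X∈𝒳} ‖X‖_F, μ_𝒴 = max_{Y∈𝒴} ‖Y‖_F, and assume μ_𝒴 > 0. Let (X̃⋆, Ỹ⋆) ∈ 𝒳×𝒴 maximize Tr(XᵀÃY) over 𝒳×𝒴. Fix ε ∈ (0,1) and let C ∈ ℝ^{r×k} satisfy ‖C − (1/μ_𝒴)·VᵀỸ⋆‖_{∞,2} ≤ ε. If X♯ ∈ 𝒳 maximizes X ↦ Tr(Xᵀ U S C) over 𝒳 and Y♯ ∈ 𝒴 maximizes Y ↦ Tr(X♯ᵀ Ã Y) over 𝒴, then Tr(X̃⋆ᵀ Ã Ỹ⋆) − Tr(X♯ᵀ Ã Y♯) ≤ 2·ε·√k·‖Ã‖₂·μ_𝒳·μ_𝒴.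 -/
open Matrix Finset

/-- The Frobenius norm of a real matrix. -/
noncomputable def frobNorm {m n : ℕ} (A : Matrix (Fin m) (Fin n) ℝ) : ℝ :=
  Real.sqrt (∑ i, ∑ j, (A i j) ^ 2)

/-- The spectral norm (largest singular value): the supremum of the Euclidean norm of
`A x` over the Euclidean unit ball. -/
noncomputable def specNorm {m n : ℕ} (A : Matrix (Fin m) (Fin n) ℝ) : ℝ :=
  sSup {t : ℝ | ∃ x : Fin n → ℝ, ∑ j, (x j) ^ 2 ≤ 1 ∧
    t = Real.sqrt (∑ i, (∑ j, A i j * x j) ^ 2)}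

lemma specSet_bdd {m n : ℕ} (A : Matrix (Fin m) (Fin n) ℝ) :
    ∀ t ∈ {t : ℝ | ∃ x : Fin n → ℝ, ∑ j, (x j) ^ 2 ≤ 1 ∧
      t = Real.sqrt (∑ i, (∑ j, A i j * x j) ^ 2)}, t ≤ frobNorm A := by
  rintro t ⟨x, hx, rfl⟩
  apply Real.sqrt_le_sqrt
  apply Finset.sum_le_sum
  intro i _
  calc (∑ j, A i j * x j) ^ 2 ≤ (∑ j, A i j ^ 2) * ∑ j, x j ^ 2 :=
        Finset.sum_mul_sq_le_sq_mul_sq _ _ _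
    _ ≤ (∑ j, A i j ^ 2) * 1 := by
        apply mul_le_mul_of_nonneg_left hx (Finset.sum_nonneg fun _ _ => sq_nonneg _)
    _ = ∑ j, A i j ^ 2 := mul_one _

lemma specNorm_nonneg {m n : ℕ} (A : Matrix (Fin m) (Fin n) ℝ) : 0 ≤ specNorm A := by
  apply le_csSup ⟨frobNorm A, specSet_bdd A⟩
  exact ⟨0, by simp⟩

lemma spec_apply_le {m n : ℕ} (A : Matrix (Fin m) (Fin n) ℝ) (x : Fin n → ℝ) :
    Real.sqrt (∑ i, (∑ j, A i j * x j) ^ 2) ≤ specNorm A * Real.sqrt (∑ j, (x j) ^ 2) := by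
  rcases eq_or_ne (∑ j, (x j) ^ 2) 0 with h0 | h0
  · have hz : ∀ j, x j = 0 := by
      intro j
      have := (Finset.sum_eq_zero_iff_of_nonneg (fun i _ => sq_nonneg (x i))).mp h0 j (mem_univ j)
      exact pow_eq_zero_iff (n := 2) (by norm_num) |>.mp this
    simp [hz]
  · have hpos : 0 < ∑ j, (x j) ^ 2 :=
      lt_of_le_of_ne (Finset.sum_nonneg fun _ _ => sq_nonneg _) (Ne.symm h0)
    set s := Real.sqrt (∑ j, (x j) ^ 2) with hs
    have hspos : 0 < s := Real.sqrt_pos.mpr hpos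
    have hmem : Real.sqrt (∑ i, (∑ j, A i j * (x j / s)) ^ 2) ≤ specNorm A := by
      apply le_csSup ⟨frobNorm A, specSet_bdd A⟩
      refine ⟨fun j => x j / s, ?_, rfl⟩
      have : ∑ j, (x j / s) ^ 2 = (∑ j, (x j) ^ 2) / s ^ 2 := by
        rw [Finset.sum_div]; congr 1; ext j; ring
      rw [this, hs, Real.sq_sqrt hpos.le, div_self h0]
    have hcol : ∀ i, (∑ j, A i j * (x j / s)) = (∑ j, A i j * x j) / s := by
      intro i
      rw [Finset.sum_div]
      congr 1; ext j; ring
    have key : Real.sqrt (∑ i, (∑ j, A i j * (x j / s)) ^ 2)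
        = Real.sqrt (∑ i, (∑ j, A i j * x j) ^ 2) / s := by
      simp_rw [hcol, div_pow]
      rw [← Finset.sum_div, Real.sqrt_div' _ (sq_nonneg s), Real.sqrt_sq hspos.le]
    rw [key] at hmem
    calc Real.sqrt (∑ i, (∑ j, A i j * x j) ^ 2)
        = Real.sqrt (∑ i, (∑ j, A i j * x j) ^ 2) / s * s := by field_simp
      _ ≤ specNorm A * s := mul_le_mul_of_nonneg_right hmem hspos.le

lemma trace_eq_sum {m k : ℕ} (X : Matrix (Fin m) (Fin k) ℝ) (M : Matrix (Fin m) (Fin k) ℝ) :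
    Matrix.trace (Xᵀ * M) = ∑ j, ∑ i, X i j * M i j := by
  simp [Matrix.trace, Matrix.mul_apply, Matrix.diag]

lemma cs_trace {m k : ℕ} (X M : Matrix (Fin m) (Fin k) ℝ) :
    |Matrix.trace (Xᵀ * M)| ≤ frobNorm X * frobNorm M := by
  rw [trace_eq_sum]
  have h1 : (∑ j, ∑ i, X i j * M i j) = ∑ p : Fin k × Fin m, X p.2 p.1 * M p.2 p.1 := by
    rw [Fintype.sum_prod_type]
  rw [h1]
  have h2 := Finset.sum_mul_sq_le_sq_mul_sq Finset.univ
    (fun p : Fin k × Fin m => X p.2 p.1) (fun p => M p.2 p.1)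
  have hX : (∑ p : Fin k × Fin m, X p.2 p.1 ^ 2) = ∑ i, ∑ j, X i j ^ 2 := by
    rw [Fintype.sum_prod_type, Finset.sum_comm]
  have hM : (∑ p : Fin k × Fin m, M p.2 p.1 ^ 2) = ∑ i, ∑ j, M i j ^ 2 := by
    rw [Fintype.sum_prod_type, Finset.sum_comm]
  calc |∑ p : Fin k × Fin m, X p.2 p.1 * M p.2 p.1|
      = Real.sqrt ((∑ p : Fin k × Fin m, X p.2 p.1 * M p.2 p.1) ^ 2) :=
        (Real.sqrt_sq_eq_abs _).symm
    _ ≤ Real.sqrt ((∑ i, ∑ j, X i j ^ 2) * (∑ i, ∑ j, M i j ^ 2)) := by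
        apply Real.sqrt_le_sqrt; rw [← hX, ← hM]; exact h2
    _ = frobNorm X * frobNorm M := Real.sqrt_mul (by positivity) _

/-- Guarantee for one iteration of the low-rank bilinear solver: if `Ã = U S Vᵀ` with
`U, V` having orthonormal columns, `(X̃⋆, Ỹ⋆)` maximizes `Tr(XᵀÃY)` over `𝒳 × 𝒴`,
`C` is within `ε` (in the `‖·‖_{∞,2}` norm) of `(1/μ_𝒴)·VᵀỸ⋆`, `X♯` maximizes
`Tr(Xᵀ U S C)` over `𝒳`, and `Y♯` maximizes `Tr(X♯ᵀ Ã Y)` over `𝒴`, then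
`Tr(X̃⋆ᵀ Ã Ỹ⋆) − Tr(X♯ᵀ Ã Y♯) ≤ 2·ε·√k·‖Ã‖₂·μ_𝒳·μ_𝒴`. -/
theorem bilinear_lowrank_candidate_guarantee {r k m n : ℕ}
    (hr : 0 < r) (hk : 0 < k) (hm : 0 < m) (hn : 0 < n)
    (U : Matrix (Fin m) (Fin r) ℝ) (V : Matrix (Fin n) (Fin r) ℝ)
    (S : Matrix (Fin r) (Fin r) ℝ)
    (hU : Uᵀ * U = 1) (hV : Vᵀ * V = 1)
    (Atil : Matrix (Fin m) (Fin n) ℝ) (hAtil : Atil = U * S * Vᵀ)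
    (𝒳 : Finset (Matrix (Fin m) (Fin k) ℝ)) (𝒴 : Finset (Matrix (Fin n) (Fin k) ℝ))
    (h𝒳 : 𝒳.Nonempty) (h𝒴 : 𝒴.Nonempty)
    (μX μY : ℝ) (hμX : μX = 𝒳.sup' h𝒳 frobNorm) (hμY : μY = 𝒴.sup' h𝒴 frobNorm)
    (hμYpos : 0 < μY)
    (Xstar : Matrix (Fin m) (Fin k) ℝ) (Ystar : Matrix (Fin n) (Fin k) ℝ)
    (hXstar : Xstar ∈ 𝒳) (hYstar : Ystar ∈ 𝒴)
    (hopt : ∀ X ∈ 𝒳, ∀ Y ∈ 𝒴,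
      Matrix.trace (Xᵀ * Atil * Y) ≤ Matrix.trace (Xstarᵀ * Atil * Ystar))
    (ε : ℝ) (hε : ε ∈ Set.Ioo (0 : ℝ) 1)
    (C : Matrix (Fin r) (Fin k) ℝ)
    (hC : ∀ j : Fin k,
      Real.sqrt (∑ i, (C i j - μY⁻¹ * (Vᵀ * Ystar) i j) ^ 2) ≤ ε)
    (Xsharp : Matrix (Fin m) (Fin k) ℝ) (hXsharp : Xsharp ∈ 𝒳)
    (hXsharpOpt : ∀ X ∈ 𝒳,
      Matrix.trace (Xᵀ * (U * S * C)) ≤ Matrix.trace (Xsharpᵀ * (U * S * C)))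
    (Ysharp : Matrix (Fin n) (Fin k) ℝ) (hYsharp : Ysharp ∈ 𝒴)
    (hYsharpOpt : ∀ Y ∈ 𝒴,
      Matrix.trace (Xsharpᵀ * Atil * Y) ≤ Matrix.trace (Xsharpᵀ * Atil * Ysharp)) :
    Matrix.trace (Xstarᵀ * Atil * Ystar) - Matrix.trace (Xsharpᵀ * Atil * Ysharp)
      ≤ 2 * ε * Real.sqrt k * specNorm Atil * μX * μY := by
  obtain ⟨hε0, hε1⟩ := hε
  set E : Matrix (Fin r) (Fin k) ℝ := C - μY⁻¹ • (Vᵀ * Ystar) with hE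
  -- decomposition of U*S*C
  have hUSC : U * S * C = U * S * E + μY⁻¹ • (Atil * Ystar) := by
    have : C = E + μY⁻¹ • (Vᵀ * Ystar) := by rw [hE]; ring_nf; abel
    rw [this, Matrix.mul_add, Matrix.mul_smul, hAtil, Matrix.mul_assoc (U * S) Vᵀ Ystar]
  have traceSplit : ∀ X : Matrix (Fin m) (Fin k) ℝ,
      Matrix.trace (Xᵀ * (U * S * C))
        = Matrix.trace (Xᵀ * (U * S * E)) + μY⁻¹ * Matrix.trace (Xᵀ * Atil * Ystar) := by
    intro X
    rw [hUSC, Matrix.mul_add, Matrix.mul_smul, Matrix.trace_add, Matrix.trace_smul,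
      smul_eq_mul, ← Matrix.mul_assoc Xᵀ Atil Ystar]
  -- (U*S) y behaves like Atil (V y)
  have hUS_apply : ∀ y : Fin r → ℝ,
      Real.sqrt (∑ i, (∑ l, (U * S) i l * y l) ^ 2)
        ≤ specNorm Atil * Real.sqrt (∑ l, (y l) ^ 2) := by
    intro y
    have hVy : ∀ i, (∑ j, Atil i j * (V.mulVec y) j) = ∑ l, (U * S) i l * y l := by
      intro i
      have : (Atil.mulVec (V.mulVec y)) i = ((U * S).mulVec y) i := by
        rw [hAtil, Matrix.mulVec_mulVec, Matrix.mul_assoc, ← Matrix.mulVec_mulVec,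
          ← Matrix.mulVec_mulVec, Matrix.mulVec_mulVec, hV, Matrix.one_mulVec]
      simpa [Matrix.mulVec, dotProduct] using this
    have hnorm : (∑ j, (V.mulVec y j) ^ 2) = ∑ l, (y l) ^ 2 := by
      have h1 : (∑ j, (V.mulVec y j) ^ 2) = (V.mulVec y) ⬝ᵥ (V.mulVec y) := by
        simp [dotProduct, sq]
      have h2 : (V.mulVec y) ⬝ᵥ (V.mulVec y) = y ⬝ᵥ ((Vᵀ * V).mulVec y) := by
        rw [← Matrix.mulVec_mulVec, Matrix.dotProduct_mulVec, ← Matrix.mulVec_transpose]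
        exact dotProduct_comm _ _
      rw [h1, h2, hV, Matrix.one_mulVec]
      simp [dotProduct, sq]
    calc Real.sqrt (∑ i, (∑ l, (U * S) i l * y l) ^ 2)
        = Real.sqrt (∑ i, (∑ j, Atil i j * (V.mulVec y) j) ^ 2) := by
          congr 1
          exact Finset.sum_congr rfl fun i _ => by rw [hVy]
      _ ≤ specNorm Atil * Real.sqrt (∑ j, (V.mulVec y j) ^ 2) := spec_apply_le Atil _
      _ = specNorm Atil * Real.sqrt (∑ l, (y l) ^ 2) := by rw [hnorm]
  -- column bound for U*S*E
  have hcol : ∀ j : Fin k, Real.sqrt (∑ i, ((U * S * E) i j) ^ 2) ≤ specNorm Atil * ε := by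
    intro j
    have hEcol : ∀ l, E l j = C l j - μY⁻¹ * (Vᵀ * Ystar) l j := by
      intro l; simp [hE, Matrix.sub_apply, Matrix.smul_apply, smul_eq_mul]
    have h1 : ∀ i, (U * S * E) i j = ∑ l, (U * S) i l * E l j := by
      intro i; rw [Matrix.mul_apply]
    calc Real.sqrt (∑ i, ((U * S * E) i j) ^ 2)
        = Real.sqrt (∑ i, (∑ l, (U * S) i l * E l j) ^ 2) := by congr 1
      _ ≤ specNorm Atil * Real.sqrt (∑ l, (E l j) ^ 2) := hUS_apply _
      _ ≤ specNorm Atil * ε := by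
          apply mul_le_mul_of_nonneg_left _ (specNorm_nonneg Atil)
          calc Real.sqrt (∑ l, (E l j) ^ 2)
              = Real.sqrt (∑ l, (C l j - μY⁻¹ * (Vᵀ * Ystar) l j) ^ 2) := by congr 1
            _ ≤ ε := hC j
  -- Frobenius bound for U*S*E
  have hfrob : frobNorm (U * S * E) ≤ specNorm Atil * ε * Real.sqrt k := by
    have hsum : (∑ i, ∑ j, ((U * S * E) i j) ^ 2) ≤ (k : ℝ) * (specNorm Atil * ε) ^ 2 := by
      rw [Finset.sum_comm]
      calc (∑ j, ∑ i, ((U * S * E) i j) ^ 2)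
          ≤ ∑ _j : Fin k, (specNorm Atil * ε) ^ 2 := by
            apply Finset.sum_le_sum
            intro j _
            have h := hcol j
            have hnn : (0:ℝ) ≤ ∑ i, ((U * S * E) i j) ^ 2 :=
              Finset.sum_nonneg fun _ _ => sq_nonneg _
            calc (∑ i, ((U * S * E) i j) ^ 2)
                = Real.sqrt (∑ i, ((U * S * E) i j) ^ 2) ^ 2 := (Real.sq_sqrt hnn).symm
              _ ≤ (specNorm Atil * ε) ^ 2 := by
                  apply pow_le_pow_left₀ (Real.sqrt_nonneg _) h
        _ = (k : ℝ) * (specNorm Atil * ε) ^ 2 := by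
            simp [Finset.sum_const, Finset.card_univ]
    calc frobNorm (U * S * E) ≤ Real.sqrt ((k : ℝ) * (specNorm Atil * ε) ^ 2) :=
          Real.sqrt_le_sqrt hsum
      _ = Real.sqrt k * (specNorm Atil * ε) := by
          rw [Real.sqrt_mul (Nat.cast_nonneg k), Real.sqrt_sq (mul_nonneg (specNorm_nonneg Atil) (le_of_lt hε0))]
      _ = specNorm Atil * ε * Real.sqrt k := by ring
  -- bound on perturbation traces
  have hB : ∀ X ∈ 𝒳, |Matrix.trace (Xᵀ * (U * S * E))| ≤ μX * (specNorm Atil * ε * Real.sqrt k) := by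
    intro X hX
    calc |Matrix.trace (Xᵀ * (U * S * E))| ≤ frobNorm X * frobNorm (U * S * E) := cs_trace X _
      _ ≤ μX * (specNorm Atil * ε * Real.sqrt k) := by
          apply mul_le_mul
          · rw [hμX]; exact Finset.le_sup' frobNorm hX
          · exact hfrob
          · exact Real.sqrt_nonneg _
          · rw [hμX]
            exact le_trans (Real.sqrt_nonneg _) (Finset.le_sup' frobNorm hX)
  set D := μX * (specNorm Atil * ε * Real.sqrt k) with hD
  have ha1 := abs_le.mp (hB Xstar hXstar)
  have ha2 := abs_le.mp (hB Xsharp hXsharp)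
  have hkey := hXsharpOpt Xstar hXstar
  rw [traceSplit Xstar, traceSplit Xsharp] at hkey
  have ht23 := hYsharpOpt Ystar hYstar
  set a1 := Matrix.trace (Xstarᵀ * (U * S * E))
  set a2 := Matrix.trace (Xsharpᵀ * (U * S * E))
  set t1 := Matrix.trace (Xstarᵀ * Atil * Ystar)
  set t2 := Matrix.trace (Xsharpᵀ * Atil * Ystar)
  set t3 := Matrix.trace (Xsharpᵀ * Atil * Ysharp)
  -- from hkey : a1 + μY⁻¹ * t1 ≤ a2 + μY⁻¹ * t2
  have hinv : μY * μY⁻¹ = 1 := mul_inv_cancel₀ hμYpos.ne'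
  have hmul : t1 - t2 ≤ μY * (a2 - a1) := by
    have hstep : μY⁻¹ * (t1 - t2) ≤ a2 - a1 := by rw [mul_sub]; linarith
    calc t1 - t2 = μY * (μY⁻¹ * (t1 - t2)) := by rw [← mul_assoc, hinv, one_mul]
      _ ≤ μY * (a2 - a1) := mul_le_mul_of_nonneg_left hstep hμYpos.le
  have hfinal : t1 - t3 ≤ 2 * D * μY := by nlinarith [ha1.1, ha1.2, ha2.1, ha2.2, hmul, ht23, hμYpos]
  calc t1 - t3 ≤ 2 * D * μY := hfinal
    _ = 2 * ε * Real.sqrt k * specNorm Atil * μX * μY := by rw [hD]; ring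
end

section
/- For every matrix B ∈ {±1}^{m×n} (with m, n ≥ 1) there exist cluster assignment matrices X ∈ {0,1}^{m×2} and Y ∈ {0,1}^{n×2} such that Tr(XᵀBY) + |E⁻| ≥ mn/2. In particular, the optimal clustering in any BCC instance (or k-BCC instance with k ≥ 2) achieves at least mn/2 agreements. -/
open Matrix
open scoped Classical

/-- A cluster assignment matrix: a 0/1 matrix in which every row has exactly one
entry equal to 1. -/
def IsClusterMatrix {d k : ℕ} (X : Matrix (Fin d) (Fin k) ℝ) : Prop :=
  (∀ i j, X i j = 0 ∨ X i j = 1) ∧ ∀ i : Fin d, ∃! j : Fin k, X i j = 1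

/-- `|E⁻|`: the number of entries of `B` equal to `-1`. -/
noncomputable def negCount {m n : ℕ} (B : Matrix (Fin m) (Fin n) ℝ) : ℕ :=
  (Finset.univ.filter (fun p : Fin m × Fin n => B p.1 p.2 = -1)).card

lemma colMatrix_cluster {d : ℕ} (c : Fin 2) :
    IsClusterMatrix (fun (_ : Fin d) (j : Fin 2) => if j = c then (1:ℝ) else 0) := by
  constructor
  · intro i j; by_cases h : j = c <;> simp [h]
  · intro i
    refine ⟨c, by simp, fun j hj => ?_⟩
    by_cases h : j = c
    · exact h
    · simp [h] at hj

lemma sum_eq {m n : ℕ} (B : Matrix (Fin m) (Fin n) ℝ) (hB : ∀ i j, B i j = 1 ∨ B i j = -1) :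
    (∑ i, ∑ j, B i j) = (m * n : ℝ) - 2 * (negCount B : ℝ) := by
  have h : ∀ i j, B i j = 1 - 2 * (if B i j = -1 then (1:ℝ) else 0) := by
    intro i j; rcases hB i j with h | h <;> simp [h] <;> norm_num
  calc (∑ i, ∑ j, B i j)
      = ∑ i, ∑ j, (1 - 2 * (if B i j = -1 then (1:ℝ) else 0)) := by
        refine Finset.sum_congr rfl fun i _ => Finset.sum_congr rfl fun j _ => h i j
    _ = (m * n : ℝ) - 2 * (negCount B : ℝ) := by
        rw [show (∑ i, ∑ j, (1 - 2 * (if B i j = -1 then (1:ℝ) else 0)))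
            = ∑ p : Fin m × Fin n, (1 - 2 * (if B p.1 p.2 = -1 then (1:ℝ) else 0)) from
          (Fintype.sum_prod_type (f := fun p : Fin m × Fin n =>
            (1 - 2 * (if B p.1 p.2 = -1 then (1:ℝ) else 0)))).symm]
        rw [Finset.sum_sub_distrib, ← Finset.mul_sum, Finset.sum_boole]
        simp [negCount, Finset.card_univ]

/-- In any BCC instance (and any k-BCC instance with k ≥ 2), there is a clustering
into (at most) 2 clusters achieving at least `mn/2` agreements; in particular the
optimal clustering achieves at least `mn/2` agreements. -/
theorem exists_two_clustering_half_agreements {m n : ℕ} (hm : 1 ≤ m) (hn : 1 ≤ n)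
    (B : Matrix (Fin m) (Fin n) ℝ) (hB : ∀ i j, B i j = 1 ∨ B i j = -1) :
    ∃ X : Matrix (Fin m) (Fin 2) ℝ, ∃ Y : Matrix (Fin n) (Fin 2) ℝ,
      IsClusterMatrix X ∧ IsClusterMatrix Y ∧
      Matrix.trace (Xᵀ * B * Y) + (negCount B : ℝ) ≥ (m * n : ℝ) / 2 := by
  classical
  set X : Matrix (Fin m) (Fin 2) ℝ := fun _ j => if j = 0 then 1 else 0 with hXdef
  have htr : ∀ c : Fin 2,
      Matrix.trace (Xᵀ * B * (Matrix.of fun (_ : Fin n) (k : Fin 2) => if k = c then (1:ℝ) else 0))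
        = if c = 0 then ∑ i, ∑ j, B i j else 0 := by
    intro c
    simp only [Matrix.trace, Matrix.diag, Matrix.mul_apply, Matrix.transpose_apply, hXdef]
    fin_cases c
    · simp only [Fin.sum_univ_two, Matrix.transpose, Matrix.of_apply]
      norm_num
      exact Finset.sum_comm
    · simp [Fin.sum_univ_two, Matrix.transpose, Matrix.of_apply]
  by_cases hc : (negCount B : ℝ) ≥ (m * n : ℝ) / 2
  · refine ⟨X, Matrix.of fun (_ : Fin n) (k : Fin 2) => if k = 1 then (1:ℝ) else 0, colMatrix_cluster 0, colMatrix_cluster 1, ?_⟩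
    have := htr 1
    rw [if_neg (by decide : (1 : Fin 2) ≠ 0)] at this
    rw [this]
    simpa using hc
  · push_neg at hc
    refine ⟨X, Matrix.of fun (_ : Fin n) (k : Fin 2) => if k = 0 then (1:ℝ) else 0, colMatrix_cluster 0, colMatrix_cluster 0, ?_⟩
    have := htr 0
    rw [if_pos rfl] at this
    rw [this, sum_eq B hB]
    linarith
end

section
/- Let B ∈ {±1}^{m×n} (with m, n ≥ 1) and let 0 < ε ≤ 1. For every positive integer k' and every pair of cluster assignment matrices X⋆ ∈ {0,1}^{m×k'}, Y⋆ ∈ {0,1}^{n×k'}, there exist a positive integer k ≤ 2/ε + 2 and cluster assignment matrices X ∈ {0,1}^{m×k}, Y ∈ {0,1}^{n×k} such that Tr(XᵀBY) ≥ Tr(X⋆ᵀBY⋆) − ε·mn. Equivalently, for any BCC instance there exists a clustering with at most 2/ε + 2 clusters whose number of agreements is at least that of the optimal clustering minus ε·nm. -/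
open Matrix

/-- The cluster assignment matrix induced by an assignment function. -/
noncomputable def clusterMatrix {d k : ℕ} (f : Fin d → Fin k) : Matrix (Fin d) (Fin k) ℝ :=
  Matrix.of fun i c => if f i = c then 1 else 0

lemma clusterMatrix_isCluster {d k : ℕ} (f : Fin d → Fin k) :
    IsClusterMatrix (clusterMatrix f) := by
  constructor
  · intro i j; by_cases h : f i = j <;> simp [clusterMatrix, h]
  · intro i
    refine ⟨f i, by simp [clusterMatrix], fun j hj => ?_⟩
    by_contra h
    simp [clusterMatrix, fun hh : f i = j => h hh.symm] at hj
    exact h hj.symm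

lemma exists_fun_of_isCluster {d k : ℕ} {X : Matrix (Fin d) (Fin k) ℝ}
    (hX : IsClusterMatrix X) : ∃ f : Fin d → Fin k, X = clusterMatrix f := by
  choose f hf hu using hX.2
  refine ⟨f, ?_⟩
  ext i c
  by_cases h : f i = c
  · subst h; simp [clusterMatrix, hf i]
  · rcases hX.1 i c with h0 | h1
    · simp [clusterMatrix, h, h0]
    · exact absurd ((hu i c h1).symm) h

lemma trace_clusterMatrix {m n k : ℕ} (B : Matrix (Fin m) (Fin n) ℝ)
    (f : Fin m → Fin k) (g : Fin n → Fin k) :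
    Matrix.trace ((clusterMatrix f)ᵀ * B * clusterMatrix g)
      = ∑ i, ∑ j, if f i = g j then B i j else 0 := by
  simp only [Matrix.trace, Matrix.diag, Matrix.mul_apply, Matrix.transpose_apply,
    clusterMatrix, Matrix.of_apply, Finset.sum_mul, Finset.mul_sum]
  rw [Finset.sum_comm]
  rw [show (∑ j : Fin n, ∑ c : Fin k, ∑ i : Fin m,
      (if f i = c then (1:ℝ) else 0) * B i j * if g j = c then 1 else 0)
    = ∑ j : Fin n, ∑ i : Fin m, ∑ c : Fin k,
      (if f i = c then (1:ℝ) else 0) * B i j * if g j = c then 1 else 0 from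
    Finset.sum_congr rfl fun j _ => Finset.sum_comm]
  rw [Finset.sum_comm]
  refine Finset.sum_congr rfl fun i _ => Finset.sum_congr rfl fun j _ => ?_
  simp only [ite_mul, mul_ite, one_mul, mul_one, zero_mul, mul_zero]
  rw [Finset.sum_ite_eq]
  simp [eq_comm]

/-- For any BCC instance with ±1 bi-adjacency matrix `B` and any `0 < ε ≤ 1`, for any
clustering (given by cluster assignment matrices `X⋆, Y⋆` into `k'` clusters) there is
a clustering into at most `2/ε + 2` clusters losing at most `ε·mn` agreements:
`Tr(XᵀBY) ≥ Tr(X⋆ᵀBY⋆) − ε·mn`. -/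
theorem constant_clusters_suffice {m n : ℕ} (hm : 1 ≤ m) (hn : 1 ≤ n)
    (B : Matrix (Fin m) (Fin n) ℝ) (hB : ∀ i j, B i j = 1 ∨ B i j = -1)
    (ε : ℝ) (hε0 : 0 < ε) (hε1 : ε ≤ 1)
    (k' : ℕ) (hk' : 0 < k')
    (Xstar : Matrix (Fin m) (Fin k') ℝ) (Ystar : Matrix (Fin n) (Fin k') ℝ)
    (hXstar : IsClusterMatrix Xstar) (hYstar : IsClusterMatrix Ystar) :
    ∃ k : ℕ, 0 < k ∧ (k : ℝ) ≤ 2 / ε + 2 ∧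
      ∃ X : Matrix (Fin m) (Fin k) ℝ, ∃ Y : Matrix (Fin n) (Fin k) ℝ,
        IsClusterMatrix X ∧ IsClusterMatrix Y ∧
        Matrix.trace (Xᵀ * B * Y)
          ≥ Matrix.trace (Xstarᵀ * B * Ystar) - ε * (m * n : ℝ) := by
  obtain ⟨f, rfl⟩ := exists_fun_of_isCluster hXstar
  obtain ⟨g, rfl⟩ := exists_fun_of_isCluster hYstar
  -- big clusters: at least ε·m/2 rows
  set big : Finset (Fin k') :=
    Finset.univ.filter
      (fun c => (ε * m / 2 : ℝ) ≤ ((Finset.univ.filter (fun i => f i = c)).card : ℝ)) with hbig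
  set t := big.card with ht
  -- bound on t : t * (ε m / 2) ≤ m
  have hcardsum : ∑ c ∈ big, ((Finset.univ.filter (fun i => f i = c)).card : ℝ) ≤ (m : ℝ) := by
    have h1 : ∑ c : Fin k', (Finset.univ.filter (fun i => f i = c)).card
        = (Finset.univ : Finset (Fin m)).card :=
      (Finset.card_eq_sum_card_fiberwise (fun i _ => Finset.mem_univ (f i))).symm
    have h2 : ∑ c ∈ big, (Finset.univ.filter (fun i => f i = c)).card
        ≤ ∑ c : Fin k', (Finset.univ.filter (fun i => f i = c)).card :=
      Finset.sum_le_sum_of_subset (Finset.subset_univ _)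
    have h3 : ∑ c ∈ big, (Finset.univ.filter (fun i => f i = c)).card ≤ m := by
      rw [h1, Finset.card_univ, Fintype.card_fin] at h2; exact h2
    calc ∑ c ∈ big, ((Finset.univ.filter (fun i => f i = c)).card : ℝ)
        = ((∑ c ∈ big, (Finset.univ.filter (fun i => f i = c)).card : ℕ) : ℝ) := by push_cast; ring
      _ ≤ (m : ℝ) := by exact_mod_cast h3
  have htbound : (t : ℝ) * (ε * m / 2) ≤ (m : ℝ) := by
    have heq : (t : ℝ) * (ε * m / 2) = ∑ _c ∈ big, (ε * m / 2 : ℝ) := by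
      rw [Finset.sum_const, nsmul_eq_mul]
    rw [heq]
    refine le_trans (Finset.sum_le_sum fun c hc => ?_) hcardsum
    exact (Finset.mem_filter.mp hc).2
  have hm0 : (0:ℝ) < m := by exact_mod_cast hm
  have hn0 : (0:ℝ) < n := by exact_mod_cast hn
  have hεm2 : (0:ℝ) < ε * m / 2 := by positivity
  have htle : (t : ℝ) ≤ 2 / ε := by
    have h := (le_div_iff₀ hεm2).mpr htbound
    calc (t:ℝ) ≤ m / (ε * m / 2) := h
      _ = 2 / ε := by field_simp
  -- the new assignment into t + 2 clusters
  have h2lt : t < t + 2 := by omega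
  have h1lt : t + 1 < t + 2 := by omega
  let e : big ≃ Fin t := big.equivFin
  let F : Fin m → Fin (t + 2) := fun i =>
    if h : f i ∈ big then (e ⟨f i, h⟩).castLE (by omega) else ⟨t, h2lt⟩
  let G : Fin n → Fin (t + 2) := fun j =>
    if h : g j ∈ big then (e ⟨g j, h⟩).castLE (by omega) else ⟨t + 1, h1lt⟩
  have hFG : ∀ i j, F i = G j ↔ (f i = g j ∧ f i ∈ big) := by
    intro i j
    constructor
    · intro h
      by_cases hi : f i ∈ big <;> by_cases hj : g j ∈ big
      · refine ⟨?_, hi⟩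
        simp only [F, G, dif_pos hi, dif_pos hj] at h
        have h' := e.injective (Fin.castLE_injective _ h)
        exact Subtype.ext_iff.mp h'
      · exfalso
        simp only [F, G, dif_pos hi, dif_neg hj] at h
        have hlt := (e ⟨f i, hi⟩).isLt
        have hv := congrArg Fin.val h
        simp at hv; omega
      · exfalso
        simp only [F, G, dif_neg hi, dif_pos hj] at h
        have hlt := (e ⟨g j, hj⟩).isLt
        have hv := congrArg Fin.val h
        simp at hv; omega
      · exfalso
        simp only [F, G, dif_neg hi, dif_neg hj] at h
        have hv := congrArg Fin.val h
        simp at hv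
    · rintro ⟨hfg, hi⟩
      have hj : g j ∈ big := hfg ▸ hi
      simp only [F, G, dif_pos hi, dif_pos hj]
      congr 2
      exact Subtype.ext hfg
  refine ⟨t + 2, by omega, ?_, clusterMatrix F, clusterMatrix G,
    clusterMatrix_isCluster F, clusterMatrix_isCluster G, ?_⟩
  · push_cast; linarith
  · rw [trace_clusterMatrix, trace_clusterMatrix]
    have hsplit : (∑ i, ∑ j, if f i = g j then B i j else 0)
        = (∑ i, ∑ j, if F i = G j then B i j else 0)
          + ∑ i, ∑ j, if f i = g j ∧ f i ∉ big then B i j else 0 := by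
      rw [← Finset.sum_add_distrib]
      refine Finset.sum_congr rfl fun i _ => ?_
      rw [← Finset.sum_add_distrib]
      refine Finset.sum_congr rfl fun j _ => ?_
      rw [if_congr (hFG i j) rfl rfl]
      by_cases h : f i = g j
      · by_cases hi : f i ∈ big
        · rw [if_pos h, if_pos ⟨h, hi⟩, if_neg (fun hc => hc.2 hi), add_zero]
        · rw [if_pos h, if_neg (fun hc => hi hc.2), if_pos ⟨h, hi⟩, zero_add]
      · rw [if_neg h, if_neg (fun hc => h hc.1), if_neg (fun hc => h hc.1), add_zero]
    rw [hsplit]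
    have hDle : (∑ i, ∑ j, if f i = g j ∧ f i ∉ big then B i j else 0) ≤ ε * (m * n : ℝ) := by
      have hstep1 : (∑ i, ∑ j, if f i = g j ∧ f i ∉ big then B i j else 0)
          ≤ ∑ i, ∑ j, if f i = g j ∧ f i ∉ big then (1:ℝ) else 0 := by
        refine Finset.sum_le_sum fun i _ => Finset.sum_le_sum fun j _ => ?_
        by_cases h : f i = g j ∧ f i ∉ big
        · rw [if_pos h, if_pos h]
          rcases hB i j with h1 | h1 <;> rw [h1] <;> norm_num
        · rw [if_neg h, if_neg h]
      have hswap : (∑ i, ∑ j, if f i = g j ∧ f i ∉ big then (1:ℝ) else 0)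
          = ∑ j, ∑ i, if f i = g j ∧ f i ∉ big then (1:ℝ) else 0 := Finset.sum_comm
      have hinner : ∀ j : Fin n,
          (∑ i, if f i = g j ∧ f i ∉ big then (1:ℝ) else 0) ≤ ε * m / 2 := by
        intro j
        by_cases hj : g j ∈ big
        · have hz : ∀ i, (if f i = g j ∧ f i ∉ big then (1:ℝ) else 0) = 0 := by
            intro i
            rw [if_neg]; rintro ⟨ha, hb⟩; exact hb (ha ▸ hj)
          rw [Finset.sum_congr rfl fun i _ => hz i]
          simp [hεm2.le]
        · have hcard : ((Finset.univ.filter (fun i => f i = g j)).card : ℝ) < ε * m / 2 := by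
            by_contra hc
            push_neg at hc
            exact hj (Finset.mem_filter.mpr ⟨Finset.mem_univ _, hc⟩)
          calc (∑ i, if f i = g j ∧ f i ∉ big then (1:ℝ) else 0)
              ≤ ∑ i, if f i = g j then (1:ℝ) else 0 := by
                refine Finset.sum_le_sum fun i _ => ?_
                by_cases h : f i = g j ∧ f i ∉ big
                · rw [if_pos h, if_pos h.1]
                · rw [if_neg h]
                  by_cases h' : f i = g j
                  · rw [if_pos h']; norm_num
                  · rw [if_neg h']
            _ = ((Finset.univ.filter (fun i => f i = g j)).card : ℝ) := by
                rw [Finset.sum_boole]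
            _ ≤ ε * m / 2 := hcard.le
      calc (∑ i, ∑ j, if f i = g j ∧ f i ∉ big then B i j else 0)
          ≤ ∑ j : Fin n, ∑ i, if f i = g j ∧ f i ∉ big then (1:ℝ) else 0 := by
            rw [← hswap]; exact hstep1
        _ ≤ ∑ _j : Fin n, (ε * m / 2) := Finset.sum_le_sum fun j _ => hinner j
        _ = n * (ε * m / 2) := by rw [Finset.sum_const, nsmul_eq_mul]; simp
        _ ≤ ε * (m * n : ℝ) := by nlinarith
    linarith
end

section
/- Let B ∈ {±1}^{m×n} (with m, n ≥ 1) and let δ ∈ (0,1). There exist a positive integer k ≤ 8/δ and cluster assignment matrices X ∈ {0,1}^{m×k}, Y ∈ {0,1}^{n×k} such that for every positive integer k' and every pair of cluster assignment matrices X' ∈ {0,1}^{m×k'}, Y' ∈ {0,1}^{n×k'}, one has Tr(XᵀBY) + |E⁻| ≥ (1−δ)·(Tr(X'ᵀBY') + |E⁻|). That is, a number of agreements within a (1−δ)-factor of the unconstrained optimum of BCC/MaxAgree can be achieved by a clustering with at most 8/δ clusters, regardless of the size of the graph. -/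
open Matrix
open scoped Classical

noncomputable def clVal {m n : ℕ} (B : Matrix (Fin m) (Fin n) ℝ) {α : Type*} [DecidableEq α]
    (f : Fin m → α) (g : Fin n → α) : ℝ :=
  ∑ i, ∑ j, if f i = g j then B i j else 0

lemma trace_eq_clVal {m n k : ℕ} (B : Matrix (Fin m) (Fin n) ℝ)
    (X : Matrix (Fin m) (Fin k) ℝ) (Y : Matrix (Fin n) (Fin k) ℝ)
    (f : Fin m → Fin k) (g : Fin n → Fin k)
    (hX : ∀ i c, X i c = if f i = c then 1 else 0)
    (hY : ∀ j c, Y j c = if g j = c then 1 else 0) :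
    Matrix.trace (Xᵀ * B * Y) = clVal B f g := by
  classical
  have h1 : Matrix.trace (Xᵀ * B * Y)
      = ∑ c, ∑ j, (∑ i, X i c * B i j) * Y j c := by
    simp [Matrix.trace, Matrix.diag, Matrix.mul_apply, Matrix.transpose_apply]
  rw [h1]
  simp_rw [Finset.sum_mul]
  have h2 : (∑ c : Fin k, ∑ j : Fin n, ∑ i : Fin m, X i c * B i j * Y j c)
      = ∑ i : Fin m, ∑ j : Fin n, ∑ c : Fin k, X i c * B i j * Y j c := by
    rw [Finset.sum_comm]
    refine Eq.trans (Finset.sum_congr rfl fun j _ => Finset.sum_comm) ?_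
    exact Finset.sum_comm
  rw [h2]
  unfold clVal
  refine Finset.sum_congr rfl fun i _ => Finset.sum_congr rfl fun j _ => ?_
  simp [hX, hY, ite_mul, mul_ite]

lemma exists_fun_of_isClusterMatrix {d k : ℕ} {X : Matrix (Fin d) (Fin k) ℝ}
    (hX : IsClusterMatrix X) :
    ∃ f : Fin d → Fin k, ∀ i c, X i c = if f i = c then 1 else 0 := by
  refine ⟨fun i => (hX.2 i).choose, fun i c => ?_⟩
  by_cases h : (hX.2 i).choose = c
  · rw [if_pos h, ← h]; exact (hX.2 i).choose_spec.1
  · rw [if_neg h]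
    rcases hX.1 i c with h0 | h1
    · exact h0
    · exact absurd ((hX.2 i).choose_spec.2 c h1).symm h

lemma isClusterMatrix_indicator {d k : ℕ} (F : Fin d → Fin k) :
    IsClusterMatrix (Matrix.of fun i c => if F i = c then (1:ℝ) else 0) := by
  constructor
  · intro i c; by_cases h : F i = c <;> simp [h]
  · intro i
    refine ⟨F i, by simp, fun c hc => ?_⟩
    by_contra hne
    simp [Ne.symm hne] at hc

lemma sum_entries_eq {m n : ℕ} (B : Matrix (Fin m) (Fin n) ℝ)
    (hB : ∀ i j, B i j = 1 ∨ B i j = -1) :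
    ∑ i, ∑ j, B i j = (m : ℝ) * n - 2 * negCount B := by
  classical
  rw [show (∑ i, ∑ j, B i j) = ∑ p : Fin m × Fin n, B p.1 p.2 from
    (Fintype.sum_prod_type' (fun i j => B i j)).symm]
  rw [← Finset.sum_filter_add_sum_filter_not Finset.univ
        (fun p : Fin m × Fin n => B p.1 p.2 = -1)]
  have hneg : ∑ p ∈ Finset.univ.filter (fun p : Fin m × Fin n => B p.1 p.2 = -1),
      B p.1 p.2 = -(negCount B : ℝ) := by
    rw [Finset.sum_congr rfl (fun p hp => (Finset.mem_filter.1 hp).2)]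
    simp [negCount]
  have hpos : ∑ p ∈ Finset.univ.filter (fun p : Fin m × Fin n => ¬ B p.1 p.2 = -1),
      B p.1 p.2 = ((m * n : ℕ) : ℝ) - (negCount B : ℝ) := by
    have : ∀ p ∈ Finset.univ.filter (fun p : Fin m × Fin n => ¬ B p.1 p.2 = -1),
        B p.1 p.2 = 1 := by
      intro p hp
      rcases hB p.1 p.2 with h | h
      · exact h
      · exact absurd h (Finset.mem_filter.1 hp).2
    rw [Finset.sum_congr rfl this, Finset.sum_const, nsmul_eq_mul, mul_one]
    have hcard := Finset.card_filter_add_card_filter_not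
      (s := (Finset.univ : Finset (Fin m × Fin n)))
      (fun p : Fin m × Fin n => B p.1 p.2 = -1)
    have : (Finset.univ.filter (fun p : Fin m × Fin n => ¬ B p.1 p.2 = -1)).card
        = m * n - negCount B := by
      simp only [Finset.card_univ, Fintype.card_prod, Fintype.card_fin] at hcard
      unfold negCount
      omega
    rw [this]
    have hle : negCount B ≤ m * n := by
      unfold negCount
      calc (Finset.univ.filter (fun p : Fin m × Fin n => B p.1 p.2 = -1)).card
          ≤ (Finset.univ : Finset (Fin m × Fin n)).card := Finset.card_filter_le _ _
        _ = m * n := by simp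
    push_cast [hle]
    ring
  rw [hneg, hpos]
  push_cast
  ring

/-- A `(1−δ)`-approximation of the unconstrained BCC/MaxAgree optimum can be achieved
using at most `8/δ` clusters, regardless of the size of the graph. -/
theorem constant_clusters_give_approx {m n : ℕ} (hm : 1 ≤ m) (hn : 1 ≤ n)
    (B : Matrix (Fin m) (Fin n) ℝ) (hB : ∀ i j, B i j = 1 ∨ B i j = -1)
    (δ : ℝ) (hδ : δ ∈ Set.Ioo (0 : ℝ) 1) :
    ∃ k : ℕ, 0 < k ∧ (k : ℝ) ≤ 8 / δ ∧
      ∃ X : Matrix (Fin m) (Fin k) ℝ, ∃ Y : Matrix (Fin n) (Fin k) ℝ,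
        IsClusterMatrix X ∧ IsClusterMatrix Y ∧
        ∀ k' : ℕ, 0 < k' →
          ∀ X' : Matrix (Fin m) (Fin k') ℝ, ∀ Y' : Matrix (Fin n) (Fin k') ℝ,
            IsClusterMatrix X' → IsClusterMatrix Y' →
            Matrix.trace (Xᵀ * B * Y) + (negCount B : ℝ)
              ≥ (1 - δ) * (Matrix.trace (X'ᵀ * B * Y') + (negCount B : ℝ)) := by
  classical
  obtain ⟨hδ0, hδ1⟩ := hδ
  set K := m + n with hKdef
  haveI : NeZero K := ⟨by omega⟩
  have hBle : ∀ i j, B i j ≤ 1 := by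
    intro i j; rcases hB i j with h | h <;> rw [h] <;> norm_num
  -- the optimal clustering with K labels
  obtain ⟨⟨f, g⟩, hopt⟩ := Finite.exists_max
    (fun p : (Fin m → Fin K) × (Fin n → Fin K) => clVal B p.1 p.2)
  set V := clVal B f g with hVdef
  -- V + negCount ≥ mn/2
  have hVconst : ∑ i, ∑ j, B i j ≤ V := by
    have := hopt ⟨fun _ => ⟨0, by omega⟩, fun _ => ⟨0, by omega⟩⟩
    simpa [clVal] using this
  have hVzero : (0 : ℝ) ≤ V := by
    have := hopt ⟨fun _ => ⟨0, by omega⟩, fun _ => ⟨1, by omega⟩⟩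
    simp only [clVal] at this
    have hz : (∑ i : Fin m, ∑ j : Fin n,
        if (⟨0, by omega⟩ : Fin K) = (⟨1, by omega⟩ : Fin K) then B i j else 0) = 0 := by
      simp [Fin.ext_iff]
    rw [hz] at this
    exact this
  have hV2 : (m : ℝ) * n ≤ 2 * (V + negCount B) := by
    have := sum_entries_eq B hB
    nlinarith [hVconst, hVzero]
  -- cluster sizes
  set acnt : Fin K → ℕ := fun c => (Finset.univ.filter fun i => f i = c).card with hacnt
  set bcnt : Fin K → ℕ := fun c => (Finset.univ.filter fun j => g j = c).card with hbcnt
  have hsuma : ∑ c, acnt c = m := by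
    have := Finset.card_eq_sum_card_fiberwise
      (f := f) (s := Finset.univ) (t := Finset.univ) (fun x _ => Finset.mem_univ _)
    simpa [acnt] using this.symm
  have hsumb : ∑ c, bcnt c = n := by
    have := Finset.card_eq_sum_card_fiberwise
      (f := g) (s := Finset.univ) (t := Finset.univ) (fun x _ => Finset.mem_univ _)
    simpa [bcnt] using this.symm
  -- big clusters
  set S : Finset (Fin K) := Finset.univ.filter
    (fun c => δ * m / 3 ≤ (acnt c : ℝ) ∨ δ * n / 3 ≤ (bcnt c : ℝ)) with hSdef
  -- cardinality bounds
  have hcard_bound : ∀ (w : Fin K → ℕ) (M : ℕ), 1 ≤ M → (∑ c, w c = M) →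
      ∀ T : Finset (Fin K), (∀ c ∈ T, δ * M / 3 ≤ (w c : ℝ)) → (T.card : ℝ) ≤ 3 / δ := by
    intro w M hM hsum T hT
    have h1 : (T.card : ℝ) * (δ * M / 3) ≤ ∑ c ∈ T, (w c : ℝ) := by
      have := Finset.card_nsmul_le_sum T (fun c => (w c : ℝ)) (δ * M / 3) hT
      simpa [nsmul_eq_mul] using this
    have h2 : ∑ c ∈ T, (w c : ℝ) ≤ M := by
      have h2a : ∑ c ∈ T, w c ≤ M := hsum ▸ Finset.sum_le_sum_of_subset (Finset.subset_univ T)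
      calc ∑ c ∈ T, (w c : ℝ) = ((∑ c ∈ T, w c : ℕ) : ℝ) := (Nat.cast_sum _ _).symm
        _ ≤ M := Nat.cast_le.2 h2a
    have hM' : (1 : ℝ) ≤ M := by exact_mod_cast hM
    rw [le_div_iff₀ hδ0]
    nlinarith
  have hScard : (S.card : ℝ) ≤ 6 / δ := by
    set S1 : Finset (Fin K) := Finset.univ.filter (fun c => δ * m / 3 ≤ (acnt c : ℝ))
    set S2 : Finset (Fin K) := Finset.univ.filter (fun c => δ * n / 3 ≤ (bcnt c : ℝ))
    have hsub : S ⊆ S1 ∪ S2 := by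
      intro c hc
      rcases (Finset.mem_filter.1 hc).2 with h | h
      · exact Finset.mem_union_left _ (Finset.mem_filter.2 ⟨Finset.mem_univ _, h⟩)
      · exact Finset.mem_union_right _ (Finset.mem_filter.2 ⟨Finset.mem_univ _, h⟩)
    have h1 : (S1.card : ℝ) ≤ 3 / δ :=
      hcard_bound acnt m hm hsuma S1 (fun c hc => (Finset.mem_filter.1 hc).2)
    have h2 : (S2.card : ℝ) ≤ 3 / δ :=
      hcard_bound bcnt n hn hsumb S2 (fun c hc => (Finset.mem_filter.1 hc).2)
    have : S.card ≤ S1.card + S2.card :=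
      le_trans (Finset.card_le_card hsub) (Finset.card_union_le _ _)
    have h3 : (S.card : ℝ) ≤ (S1.card : ℝ) + S2.card := by exact_mod_cast this
    have h4 : (3:ℝ)/δ + 3/δ = 6/δ := by ring
    linarith [h1, h2, h3, h4]
  -- the new clustering
  refine ⟨S.card + 2, by omega, ?_, ?_⟩
  · have h2δ : (2 : ℝ) ≤ 2 / δ := by
      rw [le_div_iff₀ hδ0]; nlinarith
    push_cast
    have : (6 : ℝ) / δ + 2 / δ = 8 / δ := by ring
    linarith [hScard, h2δ]
  · set k := S.card + 2 with hkdef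
    let F : Fin m → Fin k := fun i =>
      if h : f i ∈ S then Fin.castLE (by omega) (S.equivFin ⟨f i, h⟩) else ⟨S.card, by omega⟩
    let G : Fin n → Fin k := fun j =>
      if h : g j ∈ S then Fin.castLE (by omega) (S.equivFin ⟨g j, h⟩) else ⟨S.card + 1, by omega⟩
    refine ⟨Matrix.of fun i c => if F i = c then 1 else 0,
            Matrix.of fun j c => if G j = c then 1 else 0,
            isClusterMatrix_indicator F, isClusterMatrix_indicator G, ?_⟩
    intro k' hk' X' Y' hX' hY'
    obtain ⟨f', hf'⟩ := exists_fun_of_isClusterMatrix hX'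
    obtain ⟨g', hg'⟩ := exists_fun_of_isClusterMatrix hY'
    rw [trace_eq_clVal B (Matrix.of fun i c => if F i = c then 1 else 0)
          (Matrix.of fun j c => if G j = c then 1 else 0) F G
          (fun _ _ => rfl) (fun _ _ => rfl),
        trace_eq_clVal B X' Y' f' g' hf' hg']
    -- relabel the competitor into Fin K
    have hV'le : clVal B f' g' ≤ V := by
      set used : Finset (Fin k') := Finset.univ.image f' ∪ Finset.univ.image g' with husedDef
      have hcard : used.card ≤ K := by
        calc used.card ≤ (Finset.univ.image f').card + (Finset.univ.image g').card :=
              Finset.card_union_le _ _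
          _ ≤ m + n := by
              have h1 : (Finset.univ.image f').card ≤ m := by
                simpa using Finset.card_image_le (s := (Finset.univ : Finset (Fin m))) (f := f')
              have h2 : (Finset.univ.image g').card ≤ n := by
                simpa using Finset.card_image_le (s := (Finset.univ : Finset (Fin n))) (f := g')
              omega
      let e : Fin k' → Fin K := fun c =>
        if h : c ∈ used then Fin.castLE hcard (used.equivFin ⟨c, h⟩) else ⟨0, by omega⟩
      have hmemf : ∀ i, f' i ∈ used := fun i =>
        Finset.mem_union_left _ (Finset.mem_image_of_mem f' (Finset.mem_univ i))
      have hmemg : ∀ j, g' j ∈ used := fun j =>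
        Finset.mem_union_right _ (Finset.mem_image_of_mem g' (Finset.mem_univ j))
      have he : ∀ i j, (e (f' i) = e (g' j)) ↔ (f' i = g' j) := by
        intro i j
        constructor
        · intro h
          simp only [e, dif_pos (hmemf i), dif_pos (hmemg j)] at h
          have h1 := (Fin.castLE_injective hcard) h
          have h2 := (used.equivFin).injective h1
          exact congrArg Subtype.val h2
        · intro h; rw [h]
      have heq : clVal B (e ∘ f') (e ∘ g') = clVal B f' g' := by
        unfold clVal
        refine Finset.sum_congr rfl fun i _ => Finset.sum_congr rfl fun j _ => ?_
        exact if_congr (by simpa using he i j) rfl rfl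
      have := hopt ⟨e ∘ f', e ∘ g'⟩
      simp only at this
      rw [heq] at this
      exact this
    -- key pointwise bound
    have hpt : ∀ i j, (if f i = g j then B i j else 0)
        ≤ (if F i = G j then B i j else 0)
          + (if f i = g j ∧ f i ∉ S then (1:ℝ) else 0) := by
      intro i j
      by_cases hfg : f i = g j
      · by_cases hs : f i ∈ S
        · have hs' : g j ∈ S := hfg ▸ hs
          have hFG : F i = G j := by
            simp only [F, G, dif_pos hs, dif_pos hs']
            congr 2
            exact Subtype.ext hfg
          rw [if_pos hfg, if_pos hFG, if_neg (by tauto)]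
          simp
        · have hs' : g j ∉ S := hfg ▸ hs
          have hFG : F i ≠ G j := by
            simp only [F, G, dif_neg hs, dif_neg hs']
            intro h
            have := congrArg Fin.val h
            simp at this
          rw [if_pos hfg, if_neg hFG, if_pos ⟨hfg, hs⟩]
          linarith [hBle i j]
      · have hFG : F i ≠ G j := by
          by_cases hs : f i ∈ S <;> by_cases hs' : g j ∈ S
          · simp only [F, G, dif_pos hs, dif_pos hs']
            intro h
            have h1 := (Fin.castLE_injective (show S.card ≤ k by omega)) h
            have h2 := (S.equivFin).injective h1
            exact hfg (congrArg Subtype.val h2)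
          · simp only [F, G, dif_pos hs, dif_neg hs']
            intro h
            have := congrArg Fin.val h
            simp only [Fin.coe_castLE] at this
            have hlt := (S.equivFin ⟨f i, hs⟩).isLt
            omega
          · simp only [F, G, dif_neg hs, dif_pos hs']
            intro h
            have := congrArg Fin.val h
            simp only [Fin.coe_castLE] at this
            have hlt := (S.equivFin ⟨g j, hs'⟩).isLt
            omega
          · simp only [F, G, dif_neg hs, dif_neg hs']
            intro h
            have := congrArg Fin.val h
            simp at this
        rw [if_neg hfg, if_neg hFG, if_neg (by tauto)]
        simp
    -- sum of the error terms
    have herr : ∑ i, ∑ j, (if f i = g j ∧ f i ∉ S then (1:ℝ) else 0)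
        ≤ (m : ℝ) * (δ * n / 3) := by
      have hrow : ∀ i : Fin m, ∑ j, (if f i = g j ∧ f i ∉ S then (1:ℝ) else 0)
          ≤ δ * n / 3 := by
        intro i
        by_cases hs : f i ∈ S
        · have : ∀ j : Fin n, (if f i = g j ∧ f i ∉ S then (1:ℝ) else 0) = 0 := by
            intro j; rw [if_neg (by tauto)]
          rw [Finset.sum_congr rfl (fun j _ => this j), Finset.sum_const]
          simp
          positivity
        · have hb : (bcnt (f i) : ℝ) < δ * n / 3 := by
            have := hs
            simp only [S, Finset.mem_filter, Finset.mem_univ, true_and, not_or, not_le] at this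
            exact this.2
          have hsum : ∑ j, (if f i = g j ∧ f i ∉ S then (1:ℝ) else 0)
              = (bcnt (f i) : ℝ) := by
            have : ∀ j : Fin n, (if f i = g j ∧ f i ∉ S then (1:ℝ) else 0)
                = (if g j = f i then (1:ℝ) else 0) := by
              intro j
              by_cases h : g j = f i
              · rw [if_pos h, if_pos ⟨h.symm, hs⟩]
              · rw [if_neg h, if_neg (by tauto)]
            rw [Finset.sum_congr rfl (fun j _ => this j)]
            rw [Finset.sum_boole]
          linarith [hsum, hb]
      calc ∑ i, ∑ j, (if f i = g j ∧ f i ∉ S then (1:ℝ) else 0)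
          ≤ ∑ i : Fin m, δ * n / 3 := Finset.sum_le_sum (fun i _ => hrow i)
        _ = (m : ℝ) * (δ * n / 3) := by rw [Finset.sum_const]; simp [mul_comm]
    -- clVal B F G ≥ V - δmn/3
    have hFG : V - δ * m * n / 3 ≤ clVal B F G := by
      have h1 : V ≤ clVal B F G + ∑ i, ∑ j, (if f i = g j ∧ f i ∉ S then (1:ℝ) else 0) := by
        unfold clVal
        rw [hVdef]
        unfold clVal
        rw [← Finset.sum_add_distrib]
        refine Finset.sum_le_sum fun i _ => ?_
        rw [← Finset.sum_add_distrib]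
        exact Finset.sum_le_sum fun j _ => hpt i j
      have : (m : ℝ) * (δ * n / 3) = δ * m * n / 3 := by ring
      linarith [h1, herr]
    -- final arithmetic
    have h1 : (1 - δ) * (clVal B f' g' + negCount B) ≤ (1 - δ) * (V + negCount B) :=
      mul_le_mul_of_nonneg_left (by linarith) (by linarith)
    have h2 : δ * ((m:ℝ) * n) ≤ δ * (2 * (V + negCount B)) :=
      mul_le_mul_of_nonneg_left hV2 hδ0.le
    have h3 : (0:ℝ) ≤ δ * ((m:ℝ) * n) := by positivity
    nlinarith [h1, h2, h3, hFG]
end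

section
/- Let B ∈ {±1}^{m×n} (with m, n ≥ 1), let k ≥ 2, let δ ∈ (0,1), and set ε = δ/(8√k) and suppose r + 1 ≥ 64/δ². If X̃ ∈ {0,1}^{m×k} and Ỹ ∈ {0,1}^{n×k} are cluster assignment matrices satisfying max_{X,Y} Tr(XᵀBY) − Tr(X̃ᵀBỸ) ≤ 2·(ε·√k + 1/√(r+1))·mn, where the maximum is over all pairs of cluster assignment matrices X ∈ {0,1}^{m×k}, Y ∈ {0,1}^{n×k}, then Tr(X̃ᵀBỸ) + |E⁻| ≥ (1−δ)·(max_{X,Y} Tr(XᵀBY) + |E⁻|); i.e., the clustering induced by (X̃, Ỹ) achieves a number of agreements within a (1−δ)-factor of the optimal k-clustering. -/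
open Matrix
open scoped Classical

noncomputable def colMat (d k : ℕ) (c : Fin k) : Matrix (Fin d) (Fin k) ℝ :=
  Matrix.of (fun _ j => if j = c then (1:ℝ) else 0)

lemma col_cluster {d k : ℕ} (c : Fin k) : IsClusterMatrix (colMat d k c) := by
  constructor
  · intro i j; by_cases h : j = c <;> simp [colMat, h]
  · intro i
    refine ⟨c, by simp [colMat], fun j hj => ?_⟩
    by_cases h : j = c
    · exact h
    · simp [colMat, h] at hj

lemma trace_col {m n k : ℕ} (B : Matrix (Fin m) (Fin n) ℝ) (c1 c2 : Fin k) :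
    Matrix.trace ((colMat m k c1)ᵀ * B * (colMat n k c2))
    = if c1 = c2 then ∑ i, ∑ l, B i l else 0 := by
  simp only [Matrix.trace, Matrix.diag, Matrix.mul_apply, transpose_apply, colMat, Matrix.of_apply,
    Finset.sum_mul, ite_mul, mul_ite, one_mul, mul_one, zero_mul, mul_zero]
  rw [Finset.sum_comm]
  simp [Finset.sum_ite_eq, Finset.sum_ite_eq']
  by_cases h : c1 = c2 <;> simp [h, eq_comm]
  rw [Finset.sum_comm]

lemma sum_B {m n : ℕ} (B : Matrix (Fin m) (Fin n) ℝ) (hB : ∀ i j, B i j = 1 ∨ B i j = -1) :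
    ∑ i, ∑ l, B i l = (m*n : ℝ) - 2 * (negCount B : ℝ) := by
  have h1 : ∑ i, ∑ l, B i l = ∑ p : Fin m × Fin n, B p.1 p.2 := by
    rw [Fintype.sum_prod_type]
  rw [h1]
  rw [← Finset.sum_filter_add_sum_filter_not Finset.univ (fun q : Fin m × Fin n => B q.1 q.2 = -1)]
  have h2 : ∑ p ∈ Finset.univ.filter (fun q : Fin m × Fin n => B q.1 q.2 = -1), B p.1 p.2
      = -(negCount B : ℝ) := by
    rw [Finset.sum_congr rfl (fun p hp => (Finset.mem_filter.mp hp).2)]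
    simp [negCount]
  have h3 : ∑ p ∈ Finset.univ.filter (fun q : Fin m × Fin n => ¬ B q.1 q.2 = -1), B p.1 p.2
      = ((m*n - negCount B : ℕ) : ℝ) := by
    rw [Finset.sum_congr rfl (fun p hp => ((hB p.1 p.2).resolve_right (by simpa using (Finset.mem_filter.mp hp).2)))]
    simp [Finset.filter_not, Finset.card_sdiff_of_subset (Finset.filter_subset _ _), negCount]
  rw [h2, h3]
  have hle : negCount B ≤ m * n := by
    simpa [negCount] using (Finset.card_filter_le Finset.univ (fun q : Fin m × Fin n => B q.1 q.2 = -1))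
  push_cast [hle]
  ring

/-- If `k ≥ 2`, `δ ∈ (0,1)`, `ε = δ/(8√k)`, `r + 1 ≥ 64/δ²`, and the `k`-clustering
induced by `(X̃, Ỹ)` is within an additive `2·(ε·√k + 1/√(r+1))·mn` of the optimum of
`Tr(XᵀBY)` over pairs of cluster assignment matrices, then it achieves a number of
agreements within a `(1−δ)`-factor of the optimal `k`-clustering. -/
theorem kbcc_additive_to_multiplicative {m n k r : ℕ} (hm : 1 ≤ m) (hn : 1 ≤ n)
    (hk : 2 ≤ k)
    (B : Matrix (Fin m) (Fin n) ℝ) (hB : ∀ i j, B i j = 1 ∨ B i j = -1)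
    (δ ε : ℝ) (hδ : δ ∈ Set.Ioo (0 : ℝ) 1)
    (hε : ε = δ / (8 * Real.sqrt k))
    (hr : 64 / δ ^ 2 ≤ (r : ℝ) + 1)
    (Xt : Matrix (Fin m) (Fin k) ℝ) (Yt : Matrix (Fin n) (Fin k) ℝ)
    (hXt : IsClusterMatrix Xt) (hYt : IsClusterMatrix Yt)
    (hnear : ∀ X : Matrix (Fin m) (Fin k) ℝ, ∀ Y : Matrix (Fin n) (Fin k) ℝ,
      IsClusterMatrix X → IsClusterMatrix Y →
      Matrix.trace (Xᵀ * B * Y) - Matrix.trace (Xtᵀ * B * Yt)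
        ≤ 2 * (ε * Real.sqrt k + 1 / Real.sqrt ((r : ℝ) + 1)) * (m * n : ℝ)) :
    ∀ X : Matrix (Fin m) (Fin k) ℝ, ∀ Y : Matrix (Fin n) (Fin k) ℝ,
      IsClusterMatrix X → IsClusterMatrix Y →
      Matrix.trace (Xtᵀ * B * Yt) + (negCount B : ℝ)
        ≥ (1 - δ) * (Matrix.trace (Xᵀ * B * Y) + (negCount B : ℝ)) := by
  intro X Y hX hY
  obtain ⟨hδ0, hδ1⟩ := hδ
  set Tt := Matrix.trace (Xtᵀ * B * Yt) with hTt
  set T := Matrix.trace (Xᵀ * B * Y) with hT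
  set N : ℝ := (negCount B : ℝ) with hN
  have hmn : (1:ℝ) ≤ (m*n : ℝ) := by
    have : 1 ≤ m * n := Nat.one_le_iff_ne_zero.mpr (by positivity)
    exact_mod_cast this
  -- gap bound
  have hk0 : (0:ℝ) < Real.sqrt k := Real.sqrt_pos.mpr (by exact_mod_cast Nat.lt_of_lt_of_le (by norm_num) hk)
  have hεk : ε * Real.sqrt k = δ / 8 := by
    rw [hε]; field_simp
  have hsq : Real.sqrt (64 / δ ^ 2) = 8 / δ := by
    rw [show (64:ℝ) / δ ^ 2 = (8/δ)^2 by field_simp; norm_num]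
    exact Real.sqrt_sq (by positivity)
  have hrr : 1 / Real.sqrt ((r:ℝ) + 1) ≤ δ / 8 := by
    have h1 : (8:ℝ)/δ ≤ Real.sqrt ((r:ℝ) + 1) := by
      rw [← hsq]; exact Real.sqrt_le_sqrt hr
    have h2 : (0:ℝ) < 8/δ := by positivity
    calc 1 / Real.sqrt ((r:ℝ) + 1) ≤ 1 / (8/δ) := by
          apply one_div_le_one_div_of_le h2 h1
      _ = δ / 8 := by field_simp
  have hgap : 2 * (ε * Real.sqrt k + 1 / Real.sqrt ((r:ℝ) + 1)) * (m * n : ℝ)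
      ≤ δ/2 * (m*n : ℝ) := by
    have : 2 * (ε * Real.sqrt k + 1 / Real.sqrt ((r:ℝ) + 1)) ≤ δ/2 := by
      rw [hεk]; linarith
    exact mul_le_mul_of_nonneg_right this (by positivity)
  -- the three applications of hnear
  have h1 : T - Tt ≤ δ/2 * (m*n : ℝ) := le_trans (hnear X Y hX hY) hgap
  set c0 : Fin k := ⟨0, by omega⟩ with hc0
  set c1 : Fin k := ⟨1, by omega⟩ with hc1
  have hne : c0 ≠ c1 := by simp [hc0, hc1, Fin.ext_iff]
  have hA : (m*n : ℝ) - 2*N - Tt ≤ δ/2 * (m*n : ℝ) := by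
    have := le_trans (hnear (colMat m k c0) (colMat n k c0) (col_cluster _) (col_cluster _)) hgap
    rwa [trace_col, if_pos rfl, sum_B B hB] at this
  have hA0 : (0:ℝ) - Tt ≤ δ/2 * (m*n : ℝ) := by
    have := le_trans (hnear (colMat m k c0) (colMat n k c1) (col_cluster _) (col_cluster _)) hgap
    rwa [trace_col, if_neg hne] at this
  have hN0 : (0:ℝ) ≤ N := by positivity
  clear_value Tt T N
  clear hnear hB hX hY hXt hYt hε hr hεk hsq hrr hgap hne hc0 hc1 hT hTt hN B X Y Xt Yt
  by_cases hc2 : T + N ≤ (m*n : ℝ)/2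
  · by_cases hc : N ≤ (m*n : ℝ)/2
    · nlinarith [mul_nonneg hδ0.le (show (0:ℝ) ≤ (m*n:ℝ)/2 - N by linarith),
        mul_nonneg (show (0:ℝ) ≤ 1 - δ by linarith) (show (0:ℝ) ≤ (m*n:ℝ) - N - (T+N) by linarith)]
    · nlinarith [mul_nonneg hδ0.le (show (0:ℝ) ≤ N - (m*n:ℝ)/2 by linarith),
        mul_nonneg (show (0:ℝ) ≤ 1 - δ by linarith) (show (0:ℝ) ≤ N - (T+N) by linarith)]
  · nlinarith [mul_nonneg hδ0.le (show (0:ℝ) ≤ T + N - (m*n:ℝ)/2 by linarith)]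
end

section
/- Let A be a real m×n matrix and let r, k be nonnegative integers with k ≥ 1 and r + k ≤ min{m, n}. Then Σ_{i=r+1}^{r+k} σ_i(A) ≤ (k/√(r+k)) · ‖A‖_F. -/
open Matrix

theorem transpose_mul_self_isHermitian {m n : ℕ} (A : Matrix (Fin m) (Fin n) ℝ) :
    (Aᵀ * A).IsHermitian := by
  simpa [Matrix.conjTranspose_eq_transpose_of_trivial] using
    Matrix.isHermitian_conjTranspose_mul_self A

/-- The `i`-th largest singular value of `A` (0-indexed): the square root of the
`i`-th largest eigenvalue of the positive semidefinite matrix `Aᵀ * A`. -/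
noncomputable def singularValue {m n : ℕ} (A : Matrix (Fin m) (Fin n) ℝ) (i : Fin n) : ℝ :=
  Real.sqrt ((transpose_mul_self_isHermitian A).eigenvalues
    (Tuple.sort (transpose_mul_self_isHermitian A).eigenvalues i.rev))

lemma trace_eq_sum_eigenvalues' {n : ℕ} (B : Matrix (Fin n) (Fin n) ℝ) (hB : B.IsHermitian) :
    B.trace = ∑ i, hB.eigenvalues i := by
  simpa using hB.trace_eq_sum_eigenvalues

lemma posSemidef_tmul {m n : ℕ} (A : Matrix (Fin m) (Fin n) ℝ) : (Aᵀ * A).PosSemidef := by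
  simpa [Matrix.conjTranspose_eq_transpose_of_trivial] using
    Matrix.posSemidef_conjTranspose_mul_self A

/-- `Σ_{i=r+1}^{r+k} σ_i(A) ≤ (k/√(r+k))·‖A‖_F` (with 1-based indexing of the
singular values; here `Fin.natAdd r i` ranges over the 0-based indices
`r, …, r+k−1`). -/
theorem sum_middle_singularValues_le {m n r k : ℕ} (hk : 1 ≤ k)
    (hm : r + k ≤ m) (hn : r + k ≤ n)
    (A : Matrix (Fin m) (Fin n) ℝ) :
    ∑ i : Fin k, singularValue A (Fin.castLE hn (Fin.natAdd r i))
      ≤ (k : ℝ) / Real.sqrt ((r : ℝ) + (k : ℝ)) * frobNorm A := by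
  set hA := transpose_mul_self_isHermitian A with hAdef
  set g : Fin n → ℝ := fun i => hA.eigenvalues (Tuple.sort hA.eigenvalues i.rev) with hg
  have hsv : ∀ i : Fin n, singularValue A i = Real.sqrt (g i) := fun i => rfl
  -- g is nonnegative
  have hg0 : ∀ i, 0 ≤ g i := fun i => (posSemidef_tmul A).eigenvalues_nonneg _
  -- g is antitone
  have hmono : Monotone (hA.eigenvalues ∘ Tuple.sort hA.eigenvalues) :=
    Tuple.monotone_sort hA.eigenvalues
  have hganti : ∀ i j : Fin n, i ≤ j → g j ≤ g i := by
    intro i j hij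
    exact hmono (Fin.rev_le_rev.mpr hij)
  -- total sum of g equals frobNorm squared
  have hfrob0 : (0:ℝ) ≤ ∑ i, ∑ j, (A i j) ^ 2 := by positivity
  have hsum : ∑ i : Fin n, g i = frobNorm A ^ 2 := by
    have h1 : ∑ i : Fin n, g i = ∑ i : Fin n, hA.eigenvalues i := by
      exact Equiv.sum_comp (Fin.revPerm.trans (Tuple.sort hA.eigenvalues)) hA.eigenvalues
    have h2 : ∑ i : Fin n, hA.eigenvalues i = (Aᵀ * A).trace :=
      (trace_eq_sum_eigenvalues' _ hA).symm
    have h3 : (Aᵀ * A).trace = ∑ i, ∑ j, (A i j) ^ 2 := by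
      simp only [Matrix.trace, Matrix.diag, Matrix.mul_apply, Matrix.transpose_apply]
      rw [Finset.sum_comm]
      simp [pow_two]
    rw [h1, h2, h3, frobNorm, Real.sq_sqrt hfrob0]
  -- sum over first r+k of g is at most frobNorm squared
  have hpart : ∑ j : Fin (r+k), g (Fin.castLE hn j) ≤ frobNorm A ^ 2 := by
    rw [← hsum]
    have : ∑ j : Fin (r+k), g (Fin.castLE hn j)
        = ∑ j ∈ Finset.map (Fin.castLEEmb hn) Finset.univ, g j := by
      rw [Finset.sum_map]; rfl
    rw [this]
    exact Finset.sum_le_sum_of_subset_of_nonneg (Finset.subset_univ _)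
      (fun i _ _ => hg0 i)
  -- tail/head split
  have hsplit : ∑ j : Fin (r+k), g (Fin.castLE hn j)
      = ∑ j : Fin r, g (Fin.castLE hn (Fin.castAdd k j))
        + ∑ i : Fin k, g (Fin.castLE hn (Fin.natAdd r i)) :=
    Fin.sum_univ_add _
  set T := ∑ i : Fin k, g (Fin.castLE hn (Fin.natAdd r i)) with hT
  set H := ∑ j : Fin r, g (Fin.castLE hn (Fin.castAdd k j)) with hH
  have hT0 : 0 ≤ T := Finset.sum_nonneg fun i _ => hg0 _
  -- key: r * T ≤ k * H
  have hkey : (r : ℝ) * T ≤ (k : ℝ) * H := by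
    rcases Nat.eq_zero_or_pos r with hr | hr
    · subst hr
      simp only [Nat.cast_zero, zero_mul]
      have hH0 : 0 ≤ H := Finset.sum_nonneg fun j _ => hg0 _
      positivity
    · set c : ℝ := g (Fin.castLE hn (Fin.castAdd k ⟨r - 1, by omega⟩)) with hc
      have hTc : T ≤ (k : ℝ) * c := by
        have : ∀ i : Fin k, g (Fin.castLE hn (Fin.natAdd r i)) ≤ c := by
          intro i
          apply hganti
          simp [Fin.le_def]
          omega
        calc T ≤ ∑ _i : Fin k, c := Finset.sum_le_sum fun i _ => this i
          _ = (k : ℝ) * c := by simp [mul_comm]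
      have hHc : (r : ℝ) * c ≤ H := by
        have : ∀ j : Fin r, c ≤ g (Fin.castLE hn (Fin.castAdd k j)) := by
          intro j
          apply hganti
          simp [Fin.le_def]
          omega
        calc (r : ℝ) * c = ∑ _j : Fin r, c := by simp [mul_comm]
          _ ≤ H := Finset.sum_le_sum fun j _ => this j
      have hc0 : 0 ≤ c := hg0 _
      calc (r : ℝ) * T ≤ (r : ℝ) * ((k : ℝ) * c) := by
            apply mul_le_mul_of_nonneg_left hTc (by positivity)
        _ = (k : ℝ) * ((r : ℝ) * c) := by ring
        _ ≤ (k : ℝ) * H := by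
            apply mul_le_mul_of_nonneg_left hHc (by positivity)
  -- hence (r+k) * T ≤ k * frobNorm²
  have hTbound : ((r : ℝ) + k) * T ≤ (k : ℝ) * frobNorm A ^ 2 := by
    have h1 : ((r : ℝ) + k) * T = (r : ℝ) * T + (k : ℝ) * T := by ring
    have h2 : (k : ℝ) * (H + T) ≤ (k : ℝ) * frobNorm A ^ 2 := by
      apply mul_le_mul_of_nonneg_left _ (by positivity)
      rw [hsplit] at hpart
      exact hpart
    nlinarith [hkey]
  -- Cauchy–Schwarz
  set S := ∑ i : Fin k, singularValue A (Fin.castLE hn (Fin.natAdd r i)) with hS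
  have hS0 : 0 ≤ S := Finset.sum_nonneg fun i _ => Real.sqrt_nonneg _
  have hCS : S ^ 2 ≤ (k : ℝ) * T := by
    have := sq_sum_le_card_mul_sum_sq
      (s := (Finset.univ : Finset (Fin k)))
      (f := fun i => singularValue A (Fin.castLE hn (Fin.natAdd r i)))
    simp only [Finset.card_univ, Fintype.card_fin] at this
    refine le_trans this ?_
    apply mul_le_mul_of_nonneg_left _ (by positivity)
    apply le_of_eq
    apply Finset.sum_congr rfl
    intro i _
    rw [hsv, Real.sq_sqrt (hg0 _)]
  -- conclude
  have hrk : (0:ℝ) < (r : ℝ) + k := by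
    have : (1:ℝ) ≤ (k:ℝ) := by exact_mod_cast hk
    positivity
  have hfin : S ^ 2 ≤ ((k : ℝ) / Real.sqrt ((r : ℝ) + k) * frobNorm A) ^ 2 := by
    have hsq : Real.sqrt ((r : ℝ) + k) ^ 2 = (r : ℝ) + k := Real.sq_sqrt hrk.le
    rw [mul_pow, div_pow, hsq]
    rw [div_mul_eq_mul_div, le_div_iff₀ hrk]
    calc S ^ 2 * ((r:ℝ) + k) ≤ ((k : ℝ) * T) * ((r:ℝ) + k) := by
          apply mul_le_mul_of_nonneg_right hCS hrk.le
      _ = (k : ℝ) * (((r:ℝ) + k) * T) := by ring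
      _ ≤ (k : ℝ) * ((k : ℝ) * frobNorm A ^ 2) := by
          apply mul_le_mul_of_nonneg_left hTbound (by positivity)
      _ = (k : ℝ) ^ 2 * frobNorm A ^ 2 := by ring
  have hR0 : 0 ≤ (k : ℝ) / Real.sqrt ((r : ℝ) + k) * frobNorm A := by
    have : 0 ≤ frobNorm A := Real.sqrt_nonneg _
    positivity
  calc S = Real.sqrt (S ^ 2) := (Real.sqrt_sq hS0).symm
    _ ≤ Real.sqrt (((k : ℝ) / Real.sqrt ((r : ℝ) + k) * frobNorm A) ^ 2) :=
        Real.sqrt_le_sqrt hfin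
    _ = (k : ℝ) / Real.sqrt ((r : ℝ) + k) * frobNorm A := Real.sqrt_sq hR0
end
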